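/- arXiv:1203.3607 — 4 statements merged into one kernel-verified Lean document; each statement's English description precedes it below -/
import Mathlib

section
/- Let G be a Banach space admitting a C^p bump function φ with φ(x) = 1 for ‖x‖ ≤ 1/2, φ(x) = 0 for ‖x‖ ≥ 1, and sup_x ‖D^k φ(x)‖ < ∞ for all k ≤ p. Let X ⊆ G be open, x₀ ∈ X, ε > 0 with the closed ball B(x₀, 1/n) ⊆ X, and f ∈ C^p(X, E) with D^m f(x₀) = 0 for 0 ≤ m ≤ k₀ ≤ p (k₀ finite). If ‖D^i f(x)‖ ≤ η‖x - x₀‖^{k₀ - i} whenever ‖x - x₀‖ ≤ 1/n and 0 ≤ i ≤ k₀, then the function g(x) = φ(n(x - x₀)) f(x) satisfies ‖D^m g(x)‖ ≤ η · 2^m · max_{0 ≤ i ≤ m} C_i for all x ∈ X and 0 ≤ m ≤ k₀, where C_i = sup_x ‖D^i φ(x)‖. -/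
open Metric

private lemma fderiv_shift {G F : Type*} [NormedAddCommGroup G] [NormedSpace ℝ G]
    [NormedAddCommGroup F] [NormedSpace ℝ F] (h : G → F) (c x : G) :
    fderiv ℝ (fun y => h (y + c)) x = fderiv ℝ h (x + c) := by
  by_cases hd : DifferentiableAt ℝ h (x + c)
  · have h1 : HasFDerivAt (fun y => y + c) (ContinuousLinearMap.id ℝ G) x :=
      (hasFDerivAt_id x).add_const c
    have := hd.hasFDerivAt.comp x h1
    simpa [Function.comp_def] using this.fderiv
  · rw [fderiv_zero_of_not_differentiableAt hd, fderiv_zero_of_not_differentiableAt]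
    intro hcontra
    apply hd
    have : DifferentiableAt ℝ ((fun y => h (y + c)) ∘ (fun y => y - c)) (x + c) :=
      DifferentiableAt.comp _ (by simpa using hcontra) ((differentiable_id.sub_const c) _)
    simpa [Function.comp_def, sub_add_cancel] using this

private lemma iteratedFDeriv_shift {G F : Type*} [NormedAddCommGroup G] [NormedSpace ℝ G]
    [NormedAddCommGroup F] [NormedSpace ℝ F] (i : ℕ) (h : G → F) (c : G) (x : G) :
    iteratedFDeriv ℝ i (fun y => h (y + c)) x = iteratedFDeriv ℝ i h (x + c) := by
  induction i generalizing x with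
  | zero => ext m; simp
  | succ i IH =>
    rw [iteratedFDeriv_succ_eq_comp_left, iteratedFDeriv_succ_eq_comp_left]
    have : iteratedFDeriv ℝ i (fun y => h (y + c)) = fun y => iteratedFDeriv ℝ i h (y + c) :=
      funext IH
    simp only [Function.comp_apply, this]
    rw [fderiv_shift (iteratedFDeriv ℝ i h) c x]

private lemma norm_iteratedFDeriv_scale_shift {G : Type*} [NormedAddCommGroup G]
    [NormedSpace ℝ G] {p : ℕ∞} {φ : G → ℝ} (hφ : ContDiff ℝ p φ) (n : ℕ) (x₀ : G) (i : ℕ)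
    (hi : (i : ℕ∞) ≤ p) (x : G) :
    ‖iteratedFDeriv ℝ i (fun y => φ ((n : ℝ) • (y - x₀))) x‖ ≤
      ‖iteratedFDeriv ℝ i φ ((n : ℝ) • (x - x₀))‖ * (n : ℝ) ^ i := by
  set g : G →L[ℝ] G := (n : ℝ) • ContinuousLinearMap.id ℝ G with hg
  have hgy : ∀ y, g y = (n : ℝ) • y := fun y => rfl
  have h1 : (fun y => φ ((n : ℝ) • (y - x₀))) = fun y => (φ ∘ g) (y + (-x₀)) := by
    funext y; simp [Function.comp, hgy, sub_eq_add_neg]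
  rw [h1, iteratedFDeriv_shift]
  have hip : (i : WithTop ℕ∞) ≤ (p : WithTop ℕ∞) := by exact_mod_cast hi
  rw [ContinuousLinearMap.iteratedFDeriv_comp_right g hφ _ hip]
  have h2 := (iteratedFDeriv ℝ i φ (g (x + -x₀))).norm_compContinuousLinearMap_le fun _ : Fin i => g
  have hgnorm : ‖g‖ ≤ (n : ℝ) := by
    apply ContinuousLinearMap.opNorm_le_bound _ (by positivity)
    intro y
    rw [hgy, norm_smul, Real.norm_natCast]
  have h3 : (∏ _j : Fin i, ‖g‖) ≤ (n : ℝ) ^ i := by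
    rw [Finset.prod_const, Finset.card_univ, Fintype.card_fin]
    exact pow_le_pow_left₀ (norm_nonneg _) hgnorm i
  have h4 : g (x + -x₀) = (n : ℝ) • (x - x₀) := by rw [hgy]; rw [sub_eq_add_neg]
  rw [h4] at h2 ⊢
  exact h2.trans (mul_le_mul_of_nonneg_left h3 (norm_nonneg _))

/-- Cut-off estimate: if `f ∈ C^p(X,E)` has vanishing derivatives up to order `k₀` at `x₀` and
satisfies `‖D^i f(x)‖ ≤ η ‖x-x₀‖^{k₀-i}` near `x₀`, then `g(x) = φ(n(x-x₀)) f(x)` satisfies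
`‖D^m g(x)‖ ≤ η 2^m max_{i ≤ m} C_i` on `X` for `m ≤ k₀`. -/
theorem stmt_2 {G E : Type*} [NormedAddCommGroup G] [NormedSpace ℝ G] [CompleteSpace G]
    [NormedAddCommGroup E] [NormedSpace ℝ E] [CompleteSpace E]
    (p : ℕ∞) (φ : G → ℝ) (hφ : ContDiff ℝ p φ)
    (hφ1 : ∀ x : G, ‖x‖ ≤ 1 / 2 → φ x = 1) (hφ0 : ∀ x : G, 1 ≤ ‖x‖ → φ x = 0)
    (C : ℕ → ℝ) (hC : ∀ i : ℕ, (i : ℕ∞) ≤ p → ∀ x, ‖iteratedFDeriv ℝ i φ x‖ ≤ C i)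
    (X : Set G) (hX : IsOpen X) (x₀ : G) (hx₀ : x₀ ∈ X)
    (n : ℕ) (hn : 0 < n) (hball : closedBall x₀ (1 / n) ⊆ X)
    (k₀ : ℕ) (hk₀ : (k₀ : ℕ∞) ≤ p)
    (f : G → E) (hf : ContDiffOn ℝ p f X)
    (hzero : ∀ m ≤ k₀, iteratedFDerivWithin ℝ m f X x₀ = 0)
    (η : ℝ) (hη : 0 ≤ η)
    (hgrow : ∀ i ≤ k₀, ∀ x ∈ X, ‖x - x₀‖ ≤ 1 / n →
      ‖iteratedFDerivWithin ℝ i f X x‖ ≤ η * ‖x - x₀‖ ^ (k₀ - i)) :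
    ∀ m ≤ k₀, ∀ x ∈ X,
      ‖iteratedFDerivWithin ℝ m (fun x => φ ((n : ℝ) • (x - x₀)) • f x) X x‖ ≤
        η * 2 ^ m * (Finset.range (m + 1)).sup' Finset.nonempty_range_add_one C := by
  have hXu : UniqueDiffOn ℝ X := hX.uniqueDiffOn
  intro m hm x hx
  set M := (Finset.range (m + 1)).sup' Finset.nonempty_range_add_one C with hMdef
  have hCnn : ∀ i : ℕ, (i : ℕ∞) ≤ p → 0 ≤ C i := fun i hi =>
    le_trans (norm_nonneg _) (hC i hi x₀)
  have hMge : ∀ i ∈ Finset.range (m + 1), C i ≤ M := fun i hi => Finset.le_sup' C hi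
  have hM0 : 0 ≤ M := le_trans (hCnn 0 (by exact_mod_cast zero_le)) (hMge 0 (by simp))
  have hnpos : (0 : ℝ) < n := by exact_mod_cast hn
  by_cases hxb : ‖x - x₀‖ ≤ 1 / n
  · have hψ : ContDiff ℝ p (fun y => φ ((n : ℝ) • (y - x₀))) :=
      hφ.comp ((contDiff_id.sub contDiff_const).const_smul _)
    have hmk : (m : ℕ∞) ≤ (k₀ : ℕ∞) := by exact_mod_cast hm
    have hmp : (m : WithTop ℕ∞) ≤ (p : WithTop ℕ∞) := by
      exact_mod_cast hmk.trans hk₀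
    have key := norm_iteratedFDerivWithin_smul_le (𝕜 := ℝ) hψ.contDiffOn hf hXu hx hmp
    refine key.trans ?_
    have hterm : ∀ i ∈ Finset.range (m + 1),
        (m.choose i : ℝ) * ‖iteratedFDerivWithin ℝ i (fun y => φ ((n : ℝ) • (y - x₀))) X x‖ *
          ‖iteratedFDerivWithin ℝ (m - i) f X x‖ ≤ (m.choose i : ℝ) * (η * M) := by
      intro i hi
      have him : i ≤ m := Nat.lt_succ_iff.1 (Finset.mem_range.1 hi)
      have hik : (i : ℕ∞) ≤ p := le_trans (by exact_mod_cast him.trans hm) hk₀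
      have h1 : ‖iteratedFDerivWithin ℝ i (fun y => φ ((n : ℝ) • (y - x₀))) X x‖ ≤
          C i * (n : ℝ) ^ i := by
        rw [iteratedFDerivWithin_of_isOpen i hX hx]
        exact (norm_iteratedFDeriv_scale_shift hφ n x₀ i hik x).trans
          (mul_le_mul_of_nonneg_right (hC i hik _) (by positivity))
      have h2 : ‖iteratedFDerivWithin ℝ (m - i) f X x‖ ≤ η * ‖x - x₀‖ ^ (k₀ - (m - i)) :=
        hgrow (m - i) (le_trans (Nat.sub_le m i) hm) x hx hxb
      have hpow : (n : ℝ) ^ i * ‖x - x₀‖ ^ (k₀ - (m - i)) ≤ 1 := by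
        have hie : i ≤ k₀ - (m - i) := by omega
        have e1 : ‖x - x₀‖ ^ (k₀ - (m - i)) ≤ (1 / (n : ℝ)) ^ (k₀ - (m - i)) :=
          pow_le_pow_left₀ (norm_nonneg _) hxb _
        have e2 : (1 / (n : ℝ)) ^ (k₀ - (m - i)) ≤ (1 / (n : ℝ)) ^ i :=
          pow_le_pow_of_le_one (by positivity)
            (by rw [div_le_one hnpos]; exact_mod_cast hn) hie
        calc (n : ℝ) ^ i * ‖x - x₀‖ ^ (k₀ - (m - i)) ≤ (n : ℝ) ^ i * (1 / (n : ℝ)) ^ i :=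
              mul_le_mul_of_nonneg_left (e1.trans e2) (by positivity)
        _ = 1 := by rw [← mul_pow, mul_one_div_cancel hnpos.ne', one_pow]
      have hCiM : C i ≤ M := hMge i hi
      calc (m.choose i : ℝ) * ‖iteratedFDerivWithin ℝ i (fun y => φ ((n : ℝ) • (y - x₀))) X x‖ *
            ‖iteratedFDerivWithin ℝ (m - i) f X x‖
          ≤ (m.choose i : ℝ) * (C i * (n : ℝ) ^ i) * (η * ‖x - x₀‖ ^ (k₀ - (m - i))) := by
            apply mul_le_mul (mul_le_mul_of_nonneg_left h1 (by positivity)) h2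
              (norm_nonneg _)
            have : 0 ≤ C i := hCnn i hik
            positivity
        _ = (m.choose i : ℝ) * (η * C i) * ((n : ℝ) ^ i * ‖x - x₀‖ ^ (k₀ - (m - i))) := by ring
        _ ≤ (m.choose i : ℝ) * (η * C i) * 1 := by
            apply mul_le_mul_of_nonneg_left hpow
            have : 0 ≤ C i := hCnn i hik
            positivity
        _ = (m.choose i : ℝ) * (η * C i) := mul_one _
        _ ≤ (m.choose i : ℝ) * (η * M) := by
            apply mul_le_mul_of_nonneg_left (mul_le_mul_of_nonneg_left hCiM hη)
              (by positivity)
    calc ∑ i ∈ Finset.range (m + 1),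
          (m.choose i : ℝ) * ‖iteratedFDerivWithin ℝ i (fun y => φ ((n : ℝ) • (y - x₀))) X x‖ *
            ‖iteratedFDerivWithin ℝ (m - i) f X x‖
        ≤ ∑ i ∈ Finset.range (m + 1), (m.choose i : ℝ) * (η * M) := Finset.sum_le_sum hterm
      _ = (∑ i ∈ Finset.range (m + 1), (m.choose i : ℕ) : ℕ) * (η * M) := by
          rw [← Finset.sum_mul]; push_cast; ring
      _ = η * 2 ^ m * M := by rw [Nat.sum_range_choose]; push_cast; ring
  · have hx' : 1 / (n : ℝ) < ‖x - x₀‖ := lt_of_not_ge hxb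
    have hU : IsOpen {y : G | 1 / (n : ℝ) < ‖y - x₀‖} :=
      isOpen_lt continuous_const ((continuous_id.sub continuous_const).norm)
    have hgz : ∀ y ∈ {y : G | 1 / (n : ℝ) < ‖y - x₀‖},
        φ ((n : ℝ) • (y - x₀)) • f y = (0 : E) := by
      intro y hy
      have h1 : (1 : ℝ) ≤ ‖(n : ℝ) • (y - x₀)‖ := by
        rw [norm_smul, Real.norm_natCast]
        have := hy
        simp only [Set.mem_setOf_eq] at this
        calc (1 : ℝ) = (n : ℝ) * (1 / n) := by field_simp
          _ ≤ (n : ℝ) * ‖y - x₀‖ := mul_le_mul_of_nonneg_left this.le hnpos.le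
      rw [hφ0 _ h1, zero_smul]
    have heq : iteratedFDerivWithin ℝ m (fun y => φ ((n : ℝ) • (y - x₀)) • f y) X x =
        iteratedFDerivWithin ℝ m (fun _ => (0 : E)) X x := by
      apply Filter.EventuallyEq.iteratedFDerivWithin_eq
      · exact Filter.eventually_of_mem (mem_nhdsWithin_of_mem_nhds (hU.mem_nhds hx')) hgz
      · exact hgz x hx'
    rw [heq, iteratedFDerivWithin_zero_fun, Pi.zero_apply, norm_zero]
    positivity
end

section
/- Let f ∈ C^p(X, E) with p finite and suppose D^j f(x₀) = 0 for all 0 ≤ j ≤ k₀ (where k₀ ≤ p). Then for each 0 ≤ i ≤ k₀, lim_{x → x₀} ‖D^i f(x)‖ / ‖x - x₀‖^{k₀ - i} = 0. -/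
open Set Filter Metric

/-- If `f ∈ C^p(X,E)` has `D^j f(x₀) = 0` for `0 ≤ j ≤ k₀ ≤ p`, then for each `i ≤ k₀`,
`‖D^i f(x)‖ / ‖x - x₀‖^{k₀ - i} → 0` as `x → x₀` in `X \ {x₀}`. -/
theorem stmt_3 {G E : Type*} [NormedAddCommGroup G] [NormedSpace ℝ G] [CompleteSpace G]
    [NormedAddCommGroup E] [NormedSpace ℝ E] [CompleteSpace E]
    (p : ℕ) (X : Set G) (hX : IsOpen X) (x₀ : G) (hx₀ : x₀ ∈ X)
    (f : G → E) (hf : ContDiffOn ℝ p f X) (k₀ : ℕ) (hk₀ : k₀ ≤ p)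
    (hzero : ∀ j ≤ k₀, iteratedFDerivWithin ℝ j f X x₀ = 0) :
    ∀ i ≤ k₀, Filter.Tendsto
      (fun x => ‖iteratedFDerivWithin ℝ i f X x‖ / ‖x - x₀‖ ^ (k₀ - i))
      (nhdsWithin x₀ (X \ {x₀})) (nhds 0) := by
  intro i hi
  have hzero' : ∀ j ≤ k₀, iteratedFDeriv ℝ j f x₀ = 0 := by
    intro j hj
    rw [← iteratedFDerivWithin_of_isOpen j hX hx₀]
    exact hzero j hj
  have hdiff : ∀ j : ℕ, j < k₀ → ∀ y ∈ X, DifferentiableAt ℝ (iteratedFDeriv ℝ j f) y := by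
    intro j hj y hy
    have hcd : ContDiffAt ℝ p f y := hf.contDiffAt (hX.mem_nhds hy)
    have h1 : ContDiffAt ℝ 1 (iteratedFDeriv ℝ j f) y :=
      hcd.iteratedFDeriv_right (by exact_mod_cast (by omega : 1 + j ≤ p))
    exact h1.differentiableAt one_ne_zero
  have key : ∀ m : ℕ, ∀ j : ℕ, j + m ≤ k₀ → ∀ ε : ℝ, 0 < ε →
      ∀ᶠ x in nhds x₀, ‖iteratedFDeriv ℝ j f x‖ ≤ ε * ‖x - x₀‖ ^ m := by
    intro m
    induction m with
    | zero =>
      intro j hj ε hε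
      have hcd : ContDiffAt ℝ p f x₀ := hf.contDiffAt (hX.mem_nhds hx₀)
      have h0 : ContDiffAt ℝ 0 (iteratedFDeriv ℝ j f) x₀ :=
        hcd.iteratedFDeriv_right (by exact_mod_cast (by omega : 0 + j ≤ p))
      have hc : ContinuousAt (iteratedFDeriv ℝ j f) x₀ := h0.continuousAt
      have ht : Filter.Tendsto (fun x => ‖iteratedFDeriv ℝ j f x‖) (nhds x₀) (nhds 0) := by
        have := hc.norm.tendsto
        simpa [hzero' j (by omega)] using this
      filter_upwards [ht.eventually (gt_mem_nhds hε)] with x hx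
      simpa using hx.le
    | succ m ih =>
      intro j hj ε hε
      have ev := ih (j + 1) (by omega) ε hε
      obtain ⟨δ, hδ, hball⟩ : ∃ δ > 0, Metric.ball x₀ δ ⊆
          {y | y ∈ X ∧ ‖iteratedFDeriv ℝ (j + 1) f y‖ ≤ ε * ‖y - x₀‖ ^ m} := by
        have hmem : {y | y ∈ X ∧ ‖iteratedFDeriv ℝ (j + 1) f y‖ ≤ ε * ‖y - x₀‖ ^ m}
            ∈ nhds x₀ := Filter.inter_mem (hX.mem_nhds hx₀) ev
        rcases Metric.mem_nhds_iff.1 hmem with ⟨δ, hδ, hsub⟩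
        exact ⟨δ, hδ, hsub⟩
      filter_upwards [Metric.ball_mem_nhds x₀ hδ] with x hx
      set r := ‖x - x₀‖ with hr
      have hr0 : (0 : ℝ) ≤ r := norm_nonneg _
      set s := Metric.closedBall x₀ r ∩ Metric.ball x₀ δ with hs
      have hconv : Convex ℝ s := (convex_closedBall _ _).inter (convex_ball _ _)
      have hsub : s ⊆ Metric.ball x₀ δ := inter_subset_right
      have hx₀s : x₀ ∈ s := ⟨Metric.mem_closedBall_self hr0, Metric.mem_ball_self hδ⟩
      have hxs : x ∈ s := ⟨by simp [Metric.mem_closedBall, dist_eq_norm, hr], hx⟩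
      have hderiv : ∀ y ∈ s, HasFDerivWithinAt (iteratedFDeriv ℝ j f)
          (fderiv ℝ (iteratedFDeriv ℝ j f) y) s y := by
        intro y hy
        exact (hdiff j (by omega) y (hball (hsub hy)).1).hasFDerivAt.hasFDerivWithinAt
      have hbound : ∀ y ∈ s, ‖fderiv ℝ (iteratedFDeriv ℝ j f) y‖ ≤ ε * r ^ m := by
        intro y hy
        rw [norm_fderiv_iteratedFDeriv]
        refine le_trans (hball (hsub hy)).2 ?_
        have hyr : ‖y - x₀‖ ≤ r := by
          have := hy.1
          rwa [Metric.mem_closedBall, dist_eq_norm] at this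
        exact mul_le_mul_of_nonneg_left (pow_le_pow_left₀ (norm_nonneg _) hyr _) hε.le
      have hmv := hconv.norm_image_sub_le_of_norm_hasFDerivWithin_le hderiv hbound hx₀s hxs
      rw [hzero' j (by omega), sub_zero] at hmv
      calc ‖iteratedFDeriv ℝ j f x‖ ≤ ε * r ^ m * r := hmv
        _ = ε * r ^ (m + 1) := by ring
  -- conclude
  have hXnhds : nhdsWithin x₀ (X \ {x₀}) ≤ nhds x₀ := nhdsWithin_le_nhds
  rw [Metric.tendsto_nhds]
  intro ε hε
  have ev := key (k₀ - i) i (by omega) (ε / 2) (half_pos hε)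
  filter_upwards [eventually_mem_nhdsWithin, hXnhds ev] with x hxmem hxb
  have hxX : x ∈ X := hxmem.1
  have hxne : x ≠ x₀ := by simpa using hxmem.2
  rw [iteratedFDerivWithin_of_isOpen i hX hxX]
  have hb : (0 : ℝ) < ‖x - x₀‖ ^ (k₀ - i) :=
    pow_pos (norm_pos_iff.2 (sub_ne_zero.2 hxne)) _
  have hq : ‖iteratedFDeriv ℝ i f x‖ / ‖x - x₀‖ ^ (k₀ - i) ≤ ε / 2 :=
    (div_le_iff₀ hb).2 hxb
  have hq0 : (0 : ℝ) ≤ ‖iteratedFDeriv ℝ i f x‖ / ‖x - x₀‖ ^ (k₀ - i) :=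
    div_nonneg (norm_nonneg _) hb.le
  rw [Real.dist_eq, sub_zero, abs_of_nonneg hq0]
  linarith
end

section
/- Let (x_n) be a sequence in an open set X of a Banach space G converging to x₀ ∈ X with r_n := ‖x_n − x₀‖ satisfying 0 < 3 r_{n+1} < r_n for all n. Let φ be a C^p bump function on G equal to 1 on B(0,1/2), 0 outside B(0,1), with C_j := sup ‖D^j φ‖ < ∞, and set φ_n(x) = φ((2/r_n)(x − x_n)). Given f_n ∈ C^p(X, E), define η_{nk} = Σ_{j=0}^{k} C(k,j) (C_j / r_n^j) sup_{x ∈ B(x_n, r_n/2)} ‖D^{k−j} f_n(x)‖. If η_{nk}/r_n → 0 for all 0 ≤ k < p and, when p < ∞, η_{np} → 0, then the pointwise sum f = Σ φ_n f_n belongs to C^p(X, E) and D^k f(x₀) = 0 for all k ≤ p. -/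
open Metric Filter Set

section Aux
variable {G F : Type*} [NormedAddCommGroup G] [NormedSpace ℝ G]
  [NormedAddCommGroup F] [NormedSpace ℝ F]

theorem my_fderiv_shift (g : G → F) (a x : G) :
    fderiv ℝ (fun z => g (z + a)) x = fderiv ℝ g (x + a) := by
  by_cases h : DifferentiableAt ℝ g (x + a)
  · have h1 : HasFDerivAt (fun z => g (z + a)) (fderiv ℝ g (x + a)) x := by
      have := h.hasFDerivAt.comp x ((hasFDerivAt_id x).add_const a)
      simpa [Function.comp_def] using this
    exact h1.fderiv
  · rw [fderiv_zero_of_not_differentiableAt h, fderiv_zero_of_not_differentiableAt]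
    intro h'
    apply h
    have h0 : DifferentiableAt ℝ (fun z => g (z + a)) (x + a - a) := by simpa using h'
    have h2 := DifferentiableAt.comp (x + a) h0
      ((differentiable_id.sub_const a).differentiableAt)
    have h3 : ((fun z => g (z + a)) ∘ fun y => id y - a) = g := by
      funext y; simp
    rwa [h3] at h2

theorem my_iteratedFDeriv_shift (i : ℕ) (g : G → F) (a : G) (x : G) :
    iteratedFDeriv ℝ i (fun z => g (z + a)) x = iteratedFDeriv ℝ i g (x + a) := by
  induction i generalizing x with
  | zero => ext1; simp
  | succ i IH =>
    rw [iteratedFDeriv_succ_eq_comp_left, iteratedFDeriv_succ_eq_comp_left]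
    simp only [Function.comp_apply]
    congr 1
    have h1 : iteratedFDeriv ℝ i (fun z => g (z + a)) =
        fun z => iteratedFDeriv ℝ i g (z + a) := funext fun z => IH z
    rw [h1, my_fderiv_shift]

theorem my_norm_iteratedFDeriv_affine {N : WithTop ℕ∞} {φ : G → ℝ} (hφ : ContDiff ℝ N φ)
    (c : ℝ) (a : G) {i : ℕ} (hi : (i : WithTop ℕ∞) ≤ N) (x : G) {Ci : ℝ}
    (hCi : ∀ z, ‖iteratedFDeriv ℝ i φ z‖ ≤ Ci) :
    ‖iteratedFDeriv ℝ i (fun z => φ (c • z + a)) x‖ ≤ |c| ^ i * Ci := by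
  set L : G →L[ℝ] G := c • ContinuousLinearMap.id ℝ G with hL
  have hLapp : ∀ z, L z = c • z := fun z => rfl
  have hcomp : (fun z => φ (c • z + a)) = (fun u => φ (u + a)) ∘ L := by
    funext z; rfl
  have hψ : ContDiff ℝ N fun u => φ (u + a) := hφ.comp (contDiff_id.add contDiff_const)
  rw [hcomp, ContinuousLinearMap.iteratedFDeriv_comp_right L hψ x hi]
  refine le_trans (ContinuousMultilinearMap.norm_compContinuousLinearMap_le _ _) ?_
  have hLnorm : ‖L‖ ≤ |c| := by
    calc ‖L‖ ≤ |c| * ‖ContinuousLinearMap.id ℝ G‖ := by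
          rw [hL]
          simpa [Real.norm_eq_abs] using norm_smul_le c (ContinuousLinearMap.id ℝ G)
    _ ≤ |c| * 1 := by
          exact mul_le_mul_of_nonneg_left ContinuousLinearMap.norm_id_le (abs_nonneg c)
    _ = |c| := mul_one _
  have h1 : ‖iteratedFDeriv ℝ i (fun u => φ (u + a)) (L x)‖ ≤ Ci := by
    rw [my_iteratedFDeriv_shift]; exact hCi _
  have h2 : (∏ _j : Fin i, ‖L‖) ≤ |c| ^ i := by
    rw [Finset.prod_const]
    simpa using pow_le_pow_left₀ (norm_nonneg L) hLnorm i
  have hCi0 : 0 ≤ Ci := le_trans (norm_nonneg _) (hCi x)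
  calc ‖iteratedFDeriv ℝ i (fun u => φ (u + a)) (L x)‖ * ∏ _j : Fin i, ‖L‖
      ≤ Ci * |c| ^ i := by
        exact mul_le_mul h1 h2 (Finset.prod_nonneg fun _ _ => norm_nonneg _) hCi0
    _ = |c| ^ i * Ci := mul_comm _ _

end Aux

set_option maxHeartbeats 2000000 in
set_option synthInstance.maxHeartbeats 1000000 in
/-- Gluing lemma: given a lacunary sequence `x_n → x₀` in `X`, bump functions
`φ_n(x) = φ((2/r_n)(x - x_n))` and functions `f_n ∈ C^p(X,E)`, if the quantities
`η_{nk} = Σ_j C(k,j) (C_j / r_n^j) sup_{B(x_n, r_n/2)} ‖D^{k-j} f_n‖` satisfy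
`η_{nk}/r_n → 0` for `k < p` and `η_{np} → 0` when `p` is finite, then the pointwise sum
`f = Σ φ_n f_n` belongs to `C^p(X,E)` and `D^k f(x₀) = 0` for all `k ≤ p`. -/
theorem stmt_4 {G E : Type*} [NormedAddCommGroup G] [NormedSpace ℝ G] [CompleteSpace G]
    [NormedAddCommGroup E] [NormedSpace ℝ E] [CompleteSpace E]
    (p : ℕ∞) (hp : 1 ≤ p) (X : Set G) (hX : IsOpen X)
    (x : ℕ → G) (x₀ : G) (hx₀ : x₀ ∈ X) (hxX : ∀ n, x n ∈ X)
    (hconv : Tendsto x atTop (nhds x₀))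
    (r : ℕ → ℝ) (hr : ∀ n, r n = ‖x n - x₀‖)
    (hlac : ∀ n, 0 < 3 * r (n + 1) ∧ 3 * r (n + 1) < r n)
    (φ : G → ℝ) (hφ : ContDiff ℝ p φ)
    (hφ1 : ∀ z : G, ‖z‖ ≤ 1 / 2 → φ z = 1) (hφ0 : ∀ z : G, 1 ≤ ‖z‖ → φ z = 0)
    (C : ℕ → ℝ) (hC : ∀ j : ℕ, (j : ℕ∞) ≤ p → ∀ z, ‖iteratedFDeriv ℝ j φ z‖ ≤ C j)
    (f : ℕ → G → E) (hf : ∀ n, ContDiffOn ℝ p (f n) X)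
    (M : ℕ → ℕ → ℝ)
    (hM : ∀ (n : ℕ) (k : ℕ), (k : ℕ∞) ≤ p → ∀ z ∈ closedBall (x n) (r n / 2) ∩ X,
      ‖iteratedFDerivWithin ℝ k (f n) X z‖ ≤ M n k)
    (η : ℕ → ℕ → ℝ)
    (hη : ∀ n k, η n k =
      ∑ j ∈ Finset.range (k + 1), (k.choose j : ℝ) * (C j / r n ^ j) * M n (k - j))
    (hlim1 : ∀ k : ℕ, (k : ℕ∞) < p → Tendsto (fun n => η n k / r n) atTop (nhds 0))
    (hlim2 : ∀ k : ℕ, (k : ℕ∞) = p → Tendsto (fun n => η n k) atTop (nhds 0)) :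
    ContDiffOn ℝ p (fun z => ∑' n, φ ((2 / r n) • (z - x n)) • f n z) X ∧
    ∀ k : ℕ, (k : ℕ∞) ≤ p →
      iteratedFDerivWithin ℝ k (fun z => ∑' n, φ ((2 / r n) • (z - x n)) • f n z) X x₀ = 0 := by
  classical
  set g : ℕ → G → E := fun n z => φ ((2 / r n) • (z - x n)) • f n z with hgdef
  set F : G → E := fun z => ∑' n, φ ((2 / r n) • (z - x n)) • f n z with hFdef
  have hFg : ∀ w, F w = ∑' n, g n w := fun w => rfl
  have hUD : UniqueDiffOn ℝ X := hX.uniqueDiffOn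
  -- basic facts about r
  have rpos : ∀ n, 0 < r n := fun n => lt_trans (by linarith [(hlac n).1]) (hlac n).2
  have rsucc : ∀ n, r (n + 1) < r n := fun n => by
    have := (hlac n).1; have := (hlac n).2; linarith
  have ranti : Antitone r := antitone_nat_of_succ_le fun n => (rsucc n).le
  have key3 : ∀ m n, m < n → 3 * r n < r m := by
    intro m n hmn
    have h1 : r n ≤ r (m + 1) := ranti hmn
    have := (hlac m).2
    linarith
  have rlim : Tendsto r atTop (nhds 0) := by
    have h1 : Tendsto (fun n => ‖x n - x₀‖) atTop (nhds 0) :=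
      tendsto_iff_norm_sub_tendsto_zero.mp hconv
    simpa [← hr] using h1
  -- support facts
  have hgsupp : ∀ n z, r n / 2 ≤ ‖z - x n‖ → g n z = 0 := by
    intro n z h
    have h1 : (1 : ℝ) ≤ ‖(2 / r n) • (z - x n)‖ := by
      have hrn : (0:ℝ) < 2 / r n := div_pos two_pos (rpos n)
      rw [norm_smul, Real.norm_eq_abs, abs_of_pos hrn]
      have h2 : (2 / r n) * (r n / 2) ≤ (2 / r n) * ‖z - x n‖ :=
        mul_le_mul_of_nonneg_left h hrn.le
      have h3 : (2 / r n) * (r n / 2) = 1 := by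
        rw [div_mul_div_comm, mul_comm]
        exact div_self (mul_pos (rpos n) two_pos).ne'
      linarith
    simp only [hgdef, hφ0 _ h1, zero_smul]
  have hzlow : ∀ n z, z ∈ closedBall (x n) (r n / 2) → r n / 2 ≤ ‖z - x₀‖ := by
    intro n z hz
    have h1 : ‖z - x n‖ ≤ r n / 2 := by simpa [dist_eq_norm] using hz
    have h2 : ‖x n - x₀‖ - ‖x n - z‖ ≤ ‖(x n - x₀) - (x n - z)‖ := norm_sub_norm_le _ _
    have h3 : (x n - x₀) - (x n - z) = z - x₀ := by abel
    rw [h3] at h2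
    have h4 : ‖x n - z‖ = ‖z - x n‖ := norm_sub_rev _ _
    rw [← hr n] at h2
    linarith [h2, h4 ▸ h1]
  have hx0g : ∀ n, g n x₀ = 0 := by
    intro n
    apply hgsupp
    rw [norm_sub_rev, ← hr n]
    linarith [rpos n]
  have hFx0 : F x₀ = 0 := by
    rw [hFg]
    simp [hx0g]
  -- separation of balls
  have hsep : ∀ m n, m ≠ n → ∀ z ∈ closedBall (x n) (r n / 2), r m / 2 < ‖z - x m‖ := by
    intro m n hmn z hz
    have hzn : ‖z - x n‖ ≤ r n / 2 := by simpa [dist_eq_norm] using hz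
    have htri : ‖x m - x n‖ - ‖z - x n‖ ≤ ‖z - x m‖ := by
      have h1 : ‖x m - x n‖ - ‖z - x n‖ ≤ ‖(x m - x n) - (z - x n)‖ := norm_sub_norm_le _ _
      have h2 : (x m - x n) - (z - x n) = x m - z := by abel
      rw [h2, norm_sub_rev (x m) z] at h1
      exact h1
    have hd1 : r m - r n ≤ ‖x m - x n‖ := by
      have h1 := norm_sub_norm_le (x m - x₀) (x n - x₀)
      have h2 : (x m - x₀) - (x n - x₀) = x m - x n := by abel
      rw [h2, ← hr m, ← hr n] at h1
      exact h1
    have hd2 : r n - r m ≤ ‖x m - x n‖ := by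
      have h1 := norm_sub_norm_le (x n - x₀) (x m - x₀)
      have h2 : (x n - x₀) - (x m - x₀) = x n - x m := by abel
      rw [h2, ← hr m, ← hr n, norm_sub_rev] at h1
      exact h1
    rcases lt_or_gt_of_ne hmn with h | h
    · have := key3 m n h
      linarith
    · have := key3 n m h
      linarith
  -- local finiteness
  have hN : ∀ z : G, z ≠ x₀ → ∃ N : ℕ, ∃ V : Set G, IsOpen V ∧ z ∈ V ∧
      ∀ w ∈ V, ∀ m, N ≤ m → g m w = 0 := by
    intro z hz0
    set d := ‖z - x₀‖ with hd
    have hd0 : 0 < d := by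
      rw [hd]
      exact norm_sub_pos_iff.mpr hz0
    obtain ⟨N, hNe⟩ := eventually_atTop.1 (rlim.eventually_lt_const (show (0:ℝ) < d / 2 by positivity))
    refine ⟨N, ball z (d / 4), isOpen_ball, mem_ball_self (by positivity), ?_⟩
    intro w hw m hm
    by_contra hne
    have h1 : ‖w - x m‖ < r m / 2 := by
      by_contra h2
      push_neg at h2
      exact hne (hgsupp m w h2)
    have h2 : ‖w - x₀‖ ≤ ‖w - x m‖ + ‖x m - x₀‖ := by
      have := norm_add_le (w - x m) (x m - x₀)
      have h3 : (w - x m) + (x m - x₀) = w - x₀ := by abel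
      rwa [h3] at this
    have h3 : r m ≤ r N := ranti hm
    have h4 : ‖w - z‖ < d / 4 := by simpa [dist_eq_norm] using hw
    have h5 : d ≤ ‖z - w‖ + ‖w - x₀‖ := by
      have := norm_add_le (z - w) (w - x₀)
      have h6 : (z - w) + (w - x₀) = z - x₀ := by abel
      rw [h6] at this
      rw [hd]
      exact this
    have h7 : ‖z - w‖ = ‖w - z‖ := norm_sub_rev _ _
    have h8 : r N < d / 2 := hNe N le_rfl
    rw [← hr m] at h2
    linarith [rpos m]
  have hFsum : ∀ (N : ℕ) (w : G), (∀ m, N ≤ m → g m w = 0) →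
      F w = ∑ n ∈ Finset.range N, g n w := by
    intro N w hw
    rw [hFg]
    exact tsum_eq_sum fun b hb => hw b (le_of_not_gt (by simpa using hb))
  -- smoothness of pieces
  have hφn : ∀ n, ContDiffOn ℝ p (fun w => φ ((2 / r n) • (w - x n))) X :=
    fun n => (hφ.comp (contDiff_const.smul (contDiff_id.sub contDiff_const))).contDiffOn
  have hgC : ∀ n, ContDiffOn ℝ p (g n) X := by
    intro n
    rw [hgdef]
    exact (hφn n).smul (hf n)
  have hsumC : ∀ N : ℕ, ContDiffOn ℝ p (fun w => ∑ n ∈ Finset.range N, g n w) X :=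
    fun N => ContDiffOn.sum fun i _ => hgC i
  -- nonnegativity
  have hC0 : ∀ j : ℕ, (j : ℕ∞) ≤ p → 0 ≤ C j :=
    fun j hj => le_trans (norm_nonneg _) (hC j hj x₀)
  have hM0 : ∀ (n : ℕ) (k : ℕ), (k : ℕ∞) ≤ p → 0 ≤ M n k := by
    intro n k hk
    refine le_trans (norm_nonneg _) (hM n k hk (x n) ⟨?_, hxX n⟩)
    exact mem_closedBall_self (by linarith [rpos n])
  have hη0 : ∀ (n : ℕ) (k : ℕ), (k : ℕ∞) ≤ p → 0 ≤ η n k := by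
    intro n k hk
    rw [hη]
    refine Finset.sum_nonneg fun j hj => ?_
    have hjk : j ≤ k := Nat.lt_succ_iff.1 (Finset.mem_range.1 hj)
    have hjp : (j : ℕ∞) ≤ p := le_trans (by exact_mod_cast hjk) hk
    have hkj : ((k - j : ℕ) : ℕ∞) ≤ p := le_trans (by exact_mod_cast Nat.sub_le k j) hk
    have := hC0 j hjp
    have := hM0 n (k - j) hkj
    have h1 : (0:ℝ) ≤ C j / r n ^ j := div_nonneg (hC0 j hjp) (pow_nonneg (rpos n).le j)
    have h2 : (0:ℝ) ≤ (k.choose j : ℝ) := Nat.cast_nonneg _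
    exact mul_nonneg (mul_nonneg h2 h1) (hM0 n (k - j) hkj)
  -- local identification of iterated derivatives with finite sums
  have hDloc : ∀ z ∈ X, z ≠ x₀ → ∃ N : ℕ, ∃ V : Set G, IsOpen V ∧ z ∈ V ∧
      ∀ w ∈ V ∩ X, ∀ m : ℕ, iteratedFDerivWithin ℝ m F X w =
        iteratedFDerivWithin ℝ m (fun u => ∑ n ∈ Finset.range N, g n u) X w := by
    intro z hz hz0
    obtain ⟨N, V, hVo, hzV, hV⟩ := hN z hz0
    refine ⟨N, V, hVo, hzV, ?_⟩
    intro w hw m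
    have hEq : EqOn F (fun u => ∑ n ∈ Finset.range N, g n u) (X ∩ V) := by
      intro u hu
      exact hFsum N u fun m' hm' => hV u hu.2 m' hm'
    calc iteratedFDerivWithin ℝ m F X w
        = iteratedFDerivWithin ℝ m F (X ∩ V) w :=
          (iteratedFDerivWithin_inter (hVo.mem_nhds hw.1)).symm
      _ = iteratedFDerivWithin ℝ m (fun u => ∑ n ∈ Finset.range N, g n u) (X ∩ V) w :=
          iteratedFDerivWithin_congr hEq ⟨hw.2, hw.1⟩ m
      _ = iteratedFDerivWithin ℝ m (fun u => ∑ n ∈ Finset.range N, g n u) X w :=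
          iteratedFDerivWithin_inter (hVo.mem_nhds hw.1)
  -- the open sets where g_k vanishes
  have hUopen : ∀ k : ℕ, IsOpen {w : G | r k / 2 < ‖w - x k‖} := by
    intro k
    exact isOpen_lt continuous_const ((continuous_id.sub continuous_const).norm)
  have hUg : ∀ k w, r k / 2 < ‖w - x k‖ → g k w = 0 := fun k w h => hgsupp k w h.le
  -- locally F = g n on a neighborhood of any point of the ball B n
  have hFeqn : ∀ n, ∀ z ∈ closedBall (x n) (r n / 2), ∀ᶠ w in nhds z, F w = g n w := by
    intro n z hz
    have hz0 : z ≠ x₀ := by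
      intro h
      have h1 := hzlow n z hz
      rw [h, sub_self, norm_zero] at h1
      linarith [rpos n]
    obtain ⟨N, V, hVo, hzV, hV⟩ := hN z hz0
    set W : Set G := V ∩ ⋂ k ∈ (Finset.range N).erase n, {w : G | r k / 2 < ‖w - x k‖}
      with hW
    have hWo : IsOpen W := by
      refine hVo.inter ?_
      exact isOpen_biInter_finset fun k _ => hUopen k
    have hzW : z ∈ W := by
      refine ⟨hzV, ?_⟩
      simp only [Set.mem_iInter]
      intro k hk
      exact hsep k n (Finset.ne_of_mem_erase hk) z hz
    filter_upwards [hWo.mem_nhds hzW] with w hw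
    have hsum := hFsum N w fun m' hm' => hV w hw.1 m' hm'
    by_cases hn : n < N
    · rw [hsum]
      refine Finset.sum_eq_single_of_mem n (Finset.mem_range.2 hn) ?_
      intro k hk hkn
      refine hUg k w ?_
      have : w ∈ ⋂ k ∈ (Finset.range N).erase n, {w : G | r k / 2 < ‖w - x k‖} := hw.2
      simp only [Set.mem_iInter] at this
      exact this k (Finset.mem_erase.2 ⟨hkn, hk⟩)
    · push_neg at hn
      have hgn : g n w = 0 := hV w hw.1 n hn
      rw [hsum, hgn]
      refine Finset.sum_eq_zero fun k hk => ?_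
      refine hUg k w ?_
      have : w ∈ ⋂ k ∈ (Finset.range N).erase n, {w : G | r k / 2 < ‖w - x k‖} := hw.2
      simp only [Set.mem_iInter] at this
      refine this k (Finset.mem_erase.2 ⟨?_, hk⟩)
      intro hkn
      rw [hkn] at hk
      exact absurd (Finset.mem_range.1 hk) (not_lt.2 hn)
  -- F vanishes with all derivatives away from balls
  have hzero : ∀ z ∈ X, z ≠ x₀ → (∀ n, z ∉ closedBall (x n) (r n / 2)) →
      ∀ m : ℕ, iteratedFDerivWithin ℝ m F X z = 0 := by
    intro z hz hz0 hzB m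
    obtain ⟨N, V, hVo, hzV, hV⟩ := hN z hz0
    set W : Set G := V ∩ ⋂ k ∈ Finset.range N, {w : G | r k / 2 < ‖w - x k‖} with hW
    have hWo : IsOpen W := hVo.inter (isOpen_biInter_finset fun k _ => hUopen k)
    have hzW : z ∈ W := by
      refine ⟨hzV, ?_⟩
      simp only [Set.mem_iInter]
      intro k _
      have := hzB k
      simp only [mem_closedBall, dist_eq_norm, not_le] at this
      exact this
    have hev : F =ᶠ[nhds z] (fun _ => (0 : E)) := by
      filter_upwards [hWo.mem_nhds hzW] with w hw
      have hsum := hFsum N w fun m' hm' => hV w hw.1 m' hm'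
      rw [hsum]
      refine Finset.sum_eq_zero fun k hk => ?_
      refine hUg k w ?_
      have : w ∈ ⋂ k ∈ Finset.range N, {w : G | r k / 2 < ‖w - x k‖} := hw.2
      simp only [Set.mem_iInter] at this
      exact this k hk
    have h1 : iteratedFDerivWithin ℝ m F X z =
        iteratedFDerivWithin ℝ m (fun _ => (0 : E)) X z :=
      (hev.filter_mono nhdsWithin_le_nhds).iteratedFDerivWithin_eq hev.self_of_nhds m
    rw [h1, iteratedFDerivWithin_zero_fun, Pi.zero_apply]
  -- main derivative bound on the balls
  have hbound : ∀ m : ℕ, (m : ℕ∞) ≤ p → ∀ n : ℕ, ∀ z ∈ closedBall (x n) (r n / 2), z ∈ X →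
      ‖iteratedFDerivWithin ℝ m F X z‖ ≤ 2 ^ m * η n m := by
    intro m hm n z hzB hzX
    have hev : F =ᶠ[nhdsWithin z X] g n :=
      (hFeqn n z hzB).filter_mono nhdsWithin_le_nhds
    have hzeq : F z = g n z := (hFeqn n z hzB).self_of_nhds
    have h1 : iteratedFDerivWithin ℝ m F X z = iteratedFDerivWithin ℝ m (g n) X z :=
      hev.iteratedFDerivWithin_eq hzeq m
    rw [h1]
    have hmp : (m : WithTop ℕ∞) ≤ (p : WithTop ℕ∞) := by exact_mod_cast hm
    have hLeib := norm_iteratedFDerivWithin_smul_le (𝕜 := ℝ)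
      (f := fun w => φ ((2 / r n) • (w - x n))) (g := f n)
      (hφn n) (hf n) hUD hzX hmp
    have h2 : iteratedFDerivWithin ℝ m (g n) X z =
        iteratedFDerivWithin ℝ m (fun y => φ ((2 / r n) • (y - x n)) • f n y) X z := by
      rw [hgdef]
    rw [h2]
    refine le_trans hLeib ?_
    have hterm : ∀ i ∈ Finset.range (m + 1),
        (m.choose i : ℝ) * ‖iteratedFDerivWithin ℝ i (fun w => φ ((2 / r n) • (w - x n))) X z‖ *
          ‖iteratedFDerivWithin ℝ (m - i) (f n) X z‖ ≤
        2 ^ m * ((m.choose i : ℝ) * (C i / r n ^ i) * M n (m - i)) := by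
      intro i hi
      have him : i ≤ m := Nat.lt_succ_iff.1 (Finset.mem_range.1 hi)
      have hip : (i : ℕ∞) ≤ p := le_trans (by exact_mod_cast him) hm
      have hmip : ((m - i : ℕ) : ℕ∞) ≤ p := le_trans (by exact_mod_cast Nat.sub_le m i) hm
      -- bound on the bump factor
      have hφb : ‖iteratedFDerivWithin ℝ i (fun w => φ ((2 / r n) • (w - x n))) X z‖ ≤
          (2 / r n) ^ i * C i := by
        rw [iteratedFDerivWithin_of_isOpen i hX hzX]
        have hre : (fun w => φ ((2 / r n) • (w - x n))) =
            fun w => φ ((2 / r n) • w + (-((2 / r n) • x n))) := by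
          funext w
          rw [smul_sub, sub_eq_add_neg]
        rw [hre]
        have hb := my_norm_iteratedFDeriv_affine hφ (2 / r n) (-((2 / r n) • x n))
          (by exact_mod_cast hip) z (hC i hip)
        have habs : |2 / r n| = 2 / r n := abs_of_pos (div_pos two_pos (rpos n))
        rwa [habs] at hb
      have hfb : ‖iteratedFDerivWithin ℝ (m - i) (f n) X z‖ ≤ M n (m - i) :=
        hM n (m - i) hmip z ⟨hzB, hzX⟩
      have hch : (0:ℝ) ≤ (m.choose i : ℝ) := Nat.cast_nonneg _
      have hC0' := hC0 i hip
      have hM0' := hM0 n (m - i) hmip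
      have hrn : (0:ℝ) < r n := rpos n
      have step1 : (m.choose i : ℝ) *
            ‖iteratedFDerivWithin ℝ i (fun w => φ ((2 / r n) • (w - x n))) X z‖ *
            ‖iteratedFDerivWithin ℝ (m - i) (f n) X z‖ ≤
          (m.choose i : ℝ) * ((2 / r n) ^ i * C i) * M n (m - i) := by
        refine mul_le_mul ?_ hfb (norm_nonneg _) ?_
        · exact mul_le_mul_of_nonneg_left hφb hch
        · exact mul_nonneg hch (mul_nonneg (by positivity) hC0')
      refine le_trans step1 ?_
      have heq : (m.choose i : ℝ) * ((2 / r n) ^ i * C i) * M n (m - i) =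
          (2:ℝ) ^ i * ((m.choose i : ℝ) * (C i / r n ^ i) * M n (m - i)) := by
        rw [div_pow]
        field_simp
      rw [heq]
      refine mul_le_mul_of_nonneg_right ?_ ?_
      · exact pow_le_pow_right₀ one_le_two him
      · exact mul_nonneg (mul_nonneg hch (div_nonneg hC0' (pow_nonneg hrn.le i))) hM0'
    calc (∑ i ∈ Finset.range (m + 1), (m.choose i : ℝ) *
            ‖iteratedFDerivWithin ℝ i (fun w => φ ((2 / r n) • (w - x n))) X z‖ *
            ‖iteratedFDerivWithin ℝ (m - i) (f n) X z‖)
        ≤ ∑ i ∈ Finset.range (m + 1),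
            2 ^ m * ((m.choose i : ℝ) * (C i / r n ^ i) * M n (m - i)) :=
          Finset.sum_le_sum hterm
      _ = 2 ^ m * η n m := by
          rw [hη, Finset.mul_sum]
  -- differentiability with derivative 0 at x₀
  have hstep : ∀ m : ℕ, (m : ℕ∞) < p → iteratedFDerivWithin ℝ m F X x₀ = 0 →
      HasFDerivWithinAt (iteratedFDerivWithin ℝ m F X)
        (0 : G →L[ℝ] ContinuousMultilinearMap ℝ (fun _ : Fin m => G) E) X x₀ := by
    intro m hm h0
    refine HasFDerivWithinAt.of_isLittleO ?_
    rw [Asymptotics.isLittleO_iff]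
    intro c hc
    have hc' : (0:ℝ) < c / 2 ^ (m + 1) := by positivity
    obtain ⟨N, hNe⟩ := eventually_atTop.1 ((hlim1 m hm).eventually_lt_const hc')
    have hrN : (0:ℝ) < r N / 2 := by linarith [rpos N]
    filter_upwards [self_mem_nhdsWithin,
      mem_nhdsWithin_of_mem_nhds (ball_mem_nhds x₀ hrN)] with z hzX hzb
    simp only [h0, sub_zero, ContinuousLinearMap.zero_apply]
    by_cases hz0 : z = x₀
    · subst hz0
      rw [h0]
      simp
    · have hzn : ‖z - x₀‖ < r N / 2 := by simpa [dist_eq_norm] using hzb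
      by_cases hzB : ∃ n, z ∈ closedBall (x n) (r n / 2)
      · obtain ⟨n, hn⟩ := hzB
        have h2 := hbound m hm.le n z hn hzX
        have h3 := hzlow n z hn
        have h5 : N ≤ n := by
          by_contra h
          push_neg at h
          have : r N ≤ r n := ranti h.le
          linarith
        have h6 := hNe n h5
        have h7 : η n m < c / 2 ^ (m + 1) * r n := (div_lt_iff₀ (rpos n)).1 h6
        have h8 : (0:ℝ) < (2:ℝ) ^ m := by positivity
        have h9 : (2:ℝ) ^ (m + 1) = 2 * 2 ^ m := by ring
        have h10 : 2 ^ m * η n m ≤ 2 ^ m * (c / 2 ^ (m + 1) * r n) :=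
          mul_le_mul_of_nonneg_left h7.le h8.le
        have h11 : (2:ℝ) ^ m * (c / 2 ^ (m + 1) * r n) = c / 2 * r n := by
          rw [h9]
          field_simp
        have h12 : c / 2 * r n ≤ c * ‖z - x₀‖ := by nlinarith
        calc ‖iteratedFDerivWithin ℝ m F X z‖ ≤ 2 ^ m * η n m := h2
          _ ≤ c * ‖z - x₀‖ := by linarith
      · push_neg at hzB
        rw [hzero z hzX hz0 hzB m]
        simp only [norm_zero]
        positivity
  -- vanishing of all derivatives at x₀
  have hkey : ∀ m : ℕ, (m : ℕ∞) ≤ p → iteratedFDerivWithin ℝ m F X x₀ = 0 := by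
    intro m
    induction m with
    | zero =>
      intro _
      ext1 v
      simp [iteratedFDerivWithin_zero_apply, hFx0]
    | succ m IH =>
      intro hm1
      have hmlt : (m : ℕ∞) < p := by
        refine lt_of_lt_of_le ?_ hm1
        exact_mod_cast Nat.lt_succ_self m
      have h0 := IH hmlt.le
      have h1 := hstep m hmlt h0
      have h2 : fderivWithin ℝ (iteratedFDerivWithin ℝ m F X) X x₀ =
          (0 : G →L[ℝ] ContinuousMultilinearMap ℝ (fun _ : Fin m => G) E) :=
        h1.fderivWithin (hUD x₀ hx₀)
      have h3 := congrFun (iteratedFDerivWithin_succ_eq_comp_left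
        (𝕜 := ℝ) (f := F) (s := X) (n := m)) x₀
      rw [h3, Function.comp_apply, h2]
      exact LinearIsometryEquiv.map_zero _
  -- continuity of the p-th derivative at x₀ when p is finite
  have hcontp : ∀ m : ℕ, (m : ℕ∞) = p →
      ContinuousWithinAt (iteratedFDerivWithin ℝ m F X) X x₀ := by
    intro m hmp
    have hm : (m : ℕ∞) ≤ p := le_of_eq hmp
    unfold ContinuousWithinAt
    rw [hkey m hm]
    rw [Metric.tendsto_nhdsWithin_nhds]
    intro ε hε
    have hc' : (0:ℝ) < ε / 2 ^ (m + 1) := by positivity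
    obtain ⟨N, hNe⟩ := eventually_atTop.1 ((hlim2 m hmp).eventually_lt_const hc')
    refine ⟨r N / 2, by linarith [rpos N], ?_⟩
    intro z hzX hzd
    rw [dist_zero_right]
    by_cases hz0 : z = x₀
    · subst hz0
      rw [hkey m hm]
      simpa using hε
    · have hzn : ‖z - x₀‖ < r N / 2 := by rwa [dist_eq_norm] at hzd
      by_cases hzB : ∃ n, z ∈ closedBall (x n) (r n / 2)
      · obtain ⟨n, hn⟩ := hzB
        have h2 := hbound m hm n z hn hzX
        have h3 := hzlow n z hn
        have h5 : N ≤ n := by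
          by_contra h
          push_neg at h
          have : r N ≤ r n := ranti h.le
          linarith
        have h6 := hNe n h5
        have h8 : (0:ℝ) < (2:ℝ) ^ m := by positivity
        have h9 : (2:ℝ) ^ m * η n m < 2 ^ m * (ε / 2 ^ (m + 1)) :=
          (mul_lt_mul_iff_right₀ h8).2 h6
        have h10 : (2:ℝ) ^ m * (ε / 2 ^ (m + 1)) = ε / 2 := by
          have h11 : (2:ℝ) ^ (m + 1) = 2 * 2 ^ m := by ring
          rw [h11]
          field_simp
        calc ‖iteratedFDerivWithin ℝ m F X z‖ ≤ 2 ^ m * η n m := h2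
          _ < ε := by rw [h10] at h9; linarith
      · push_neg at hzB
        rw [hzero z hzX hz0 hzB m]
        simpa using hε
  -- assembling everything
  refine ⟨?_, fun k hk => hkey k hk⟩
  refine contDiffOn_of_continuousOn_differentiableOn ?_ ?_
  · -- continuity of all derivatives
    intro m hm
    intro z hz
    by_cases hz0 : z = x₀
    · subst hz0
      rcases hm.lt_or_eq with hlt | heq
      · exact (hstep m hlt (hkey m hm)).continuousWithinAt
      · exact hcontp m heq
    · obtain ⟨N, V, hVo, hzV, hVeq⟩ := hDloc z hz hz0
      have hcg : ContinuousWithinAt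
          (iteratedFDerivWithin ℝ m (fun u => ∑ n ∈ Finset.range N, g n u) X) X z :=
        (hsumC N).continuousOn_iteratedFDerivWithin (by exact_mod_cast hm) hUD z hz
      have hev : iteratedFDerivWithin ℝ m F X =ᶠ[nhdsWithin z X]
          iteratedFDerivWithin ℝ m (fun u => ∑ n ∈ Finset.range N, g n u) X := by
        filter_upwards [mem_nhdsWithin_of_mem_nhds (hVo.mem_nhds hzV),
          self_mem_nhdsWithin] with w hwV hwX
        exact hVeq w ⟨hwV, hwX⟩ m
      exact hcg.congr_of_eventuallyEq hev (hVeq z ⟨hzV, hz⟩ m)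
  · -- differentiability of lower derivatives
    intro m hm
    intro z hz
    by_cases hz0 : z = x₀
    · subst hz0
      exact (hstep m hm (hkey m hm.le)).differentiableWithinAt
    · obtain ⟨N, V, hVo, hzV, hVeq⟩ := hDloc z hz hz0
      have hdg : DifferentiableWithinAt ℝ
          (iteratedFDerivWithin ℝ m (fun u => ∑ n ∈ Finset.range N, g n u) X) X z :=
        (hsumC N).differentiableOn_iteratedFDerivWithin (by exact_mod_cast hm) hUD z hz
      have hev : iteratedFDerivWithin ℝ m F X =ᶠ[nhdsWithin z X]
          iteratedFDerivWithin ℝ m (fun u => ∑ n ∈ Finset.range N, g n u) X := by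
        filter_upwards [mem_nhdsWithin_of_mem_nhds (hVo.mem_nhds hzV),
          self_mem_nhdsWithin] with w hwV hwX
        exact hVeq w ⟨hwV, hwX⟩ m
      exact (hev.differentiableWithinAt_iff (hVeq z ⟨hzV, hz⟩ m)).2 hdg
end

section
/- The map F = (F₀, …, F_{m₀+1}) : ℝ^{m₀+2} → ℝ^{m₀+2}, where F_j(t₀,…,t_{m₀}, s) = Σ_{k=0}^{j} C(j,k) t_{j−k} s^k for 0 ≤ j ≤ m₀ and F_{m₀+1} = Σ_{k=1}^{m₀+1} C(m₀+1,k) t_{m₀+1−k} s^k, has an invertible Jacobian (hence a local C^∞ inverse) at every point (t₀, …, t_{m₀}, s) with t_{m₀} ≠ 0. -/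
open scoped ContDiff

/-- `F_j(t₀,…,t_{m₀},s) = Σ_{k=0}^{j} C(j,k) t_{j-k} s^k` for `j ≤ m₀`, and
`F_{m₀+1}(t₀,…,t_{m₀},s) = Σ_{k=1}^{m₀+1} C(m₀+1,k) t_{m₀+1-k} s^k`. -/
noncomputable def Fpoly (m₀ j : ℕ) (t : ℕ → ℝ) (s : ℝ) : ℝ :=
  if j ≤ m₀ then ∑ k ∈ Finset.range (j + 1), (j.choose k : ℝ) * t (j - k) * s ^ k
  else ∑ k ∈ Finset.Icc 1 (m₀ + 1), ((m₀ + 1).choose k : ℝ) * t (m₀ + 1 - k) * s ^ k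

/-- The map `F = (F₀,…,F_{m₀+1}) : ℝ^{m₀+2} → ℝ^{m₀+2}`. -/
noncomputable def Fmap (m₀ : ℕ) (ts : (Fin (m₀ + 1) → ℝ) × ℝ) : Fin (m₀ + 2) → ℝ :=
  fun j => Fpoly m₀ (j : ℕ) (fun n => if h : n < m₀ + 1 then ts.1 ⟨n, h⟩ else 0) ts.2

/-! ### Auxiliary definitions -/

/-- Extension of a `Fin (m₀+1)`-indexed tuple to `ℕ` by zero. -/
def extF (m₀ : ℕ) (t : Fin (m₀ + 1) → ℝ) : ℕ → ℝ :=
  fun n => if h : n < m₀ + 1 then t ⟨n, h⟩ else 0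

lemma extF_coe (m₀ : ℕ) (t : Fin (m₀ + 1) → ℝ) (i : Fin (m₀ + 1)) :
    extF m₀ t (i : ℕ) = t i := by
  simp [extF, i.isLt]

lemma extF_top (m₀ : ℕ) (t : Fin (m₀ + 1) → ℝ) : extF m₀ t (m₀ + 1) = 0 := by
  simp [extF]

/-- The `n`-th coordinate of the first factor, as a continuous linear map (zero if `n > m₀`). -/
noncomputable def PnCLM (m₀ n : ℕ) : ((Fin (m₀ + 1) → ℝ) × ℝ) →L[ℝ] ℝ :=
  if h : n < m₀ + 1 then
    (ContinuousLinearMap.proj (⟨n, h⟩ : Fin (m₀ + 1))).comp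
      (ContinuousLinearMap.fst ℝ (Fin (m₀ + 1) → ℝ) ℝ)
  else 0

lemma PnCLM_apply (m₀ n : ℕ) (v : (Fin (m₀ + 1) → ℝ) × ℝ) :
    PnCLM m₀ n v = extF m₀ v.1 n := by
  unfold PnCLM extF
  split <;> simp

/-- The last coordinate, as a continuous linear map. -/
noncomputable def SCLM (m₀ : ℕ) : ((Fin (m₀ + 1) → ℝ) × ℝ) →L[ℝ] ℝ :=
  ContinuousLinearMap.snd ℝ (Fin (m₀ + 1) → ℝ) ℝ

/-- The `j`-th row of the Jacobian of `Fmap` at `(t, s)`. -/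
noncomputable def rowCLM (m₀ : ℕ) (t : Fin (m₀ + 1) → ℝ) (s : ℝ) (j : ℕ) :
    ((Fin (m₀ + 1) → ℝ) × ℝ) →L[ℝ] ℝ :=
  (∑ i ∈ Finset.range (m₀ + 1), ((j.choose i : ℝ) * s ^ (j - i)) • PnCLM m₀ i)
    + ((j : ℝ) * Fpoly m₀ (j - 1) (extF m₀ t) s) • SCLM m₀

lemma rowCLM_apply (m₀ : ℕ) (t : Fin (m₀ + 1) → ℝ) (s : ℝ) (j : ℕ)
    (v : (Fin (m₀ + 1) → ℝ) × ℝ) :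
    rowCLM m₀ t s j v
      = (∑ i ∈ Finset.range (m₀ + 1), (j.choose i : ℝ) * s ^ (j - i) * extF m₀ v.1 i)
        + ((j : ℝ) * Fpoly m₀ (j - 1) (extF m₀ t) s) * v.2 := by
  simp [rowCLM, PnCLM_apply, SCLM, mul_assoc]

/-- The Jacobian of `Fmap` at `(t, s)`, as a continuous linear map. -/
noncomputable def ACLM (m₀ : ℕ) (t : Fin (m₀ + 1) → ℝ) (s : ℝ) :
    ((Fin (m₀ + 1) → ℝ) × ℝ) →L[ℝ] (Fin (m₀ + 2) → ℝ) :=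
  ContinuousLinearMap.pi fun j : Fin (m₀ + 2) => rowCLM m₀ t s (j : ℕ)

lemma Fpoly_extF (m₀ j : ℕ) (hj : j ≤ m₀ + 1) (x : Fin (m₀ + 1) → ℝ) (y : ℝ) :
    Fpoly m₀ j (extF m₀ x) y
      = ∑ k ∈ Finset.range (j + 1), (j.choose k : ℝ) * extF m₀ x (j - k) * y ^ k := by
  rcases le_or_gt j m₀ with h | h
  · rw [Fpoly, if_pos h]
  · have hj' : j = m₀ + 1 := le_antisymm hj h
    subst hj'
    rw [Fpoly, if_neg (by omega)]
    rw [Finset.range_eq_Ico, Finset.sum_eq_sum_Ico_succ_bot (by omega)]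
    rw [show Finset.Icc 1 (m₀ + 1) = Finset.Ico 1 (m₀ + 2) from (Finset.Ico_add_one_right_eq_Icc _ _).symm]
    simp [extF_top]

lemma Fmap_apply (m₀ : ℕ) (ts : (Fin (m₀ + 1) → ℝ) × ℝ) (j : Fin (m₀ + 2)) :
    Fmap m₀ ts j = Fpoly m₀ (j : ℕ) (extF m₀ ts.1) ts.2 := rfl

/-! ### The derivative -/

lemma term_deriv (m₀ : ℕ) (c : ℝ) (n k : ℕ) (p : (Fin (m₀ + 1) → ℝ) × ℝ) :
    HasFDerivAt (fun ts : (Fin (m₀ + 1) → ℝ) × ℝ => c * extF m₀ ts.1 n * ts.2 ^ k)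
      ((c * p.2 ^ k) • PnCLM m₀ n + (c * extF m₀ p.1 n * (k * p.2 ^ (k - 1))) • SCLM m₀) p := by
  have hext : (fun ts : (Fin (m₀ + 1) → ℝ) × ℝ => extF m₀ ts.1 n) = ⇑(PnCLM m₀ n) := by
    funext ts; rw [PnCLM_apply]
  have h1 : HasFDerivAt (fun ts : (Fin (m₀ + 1) → ℝ) × ℝ => c * extF m₀ ts.1 n)
      (c • PnCLM m₀ n) p := by
    have h0 := ((PnCLM m₀ n).hasFDerivAt (x := p)).const_mul c
    exact h0.congr_of_eventuallyEq (Filter.Eventually.of_forall fun ts => by simp [PnCLM_apply])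
  have h2 : HasFDerivAt (fun ts : (Fin (m₀ + 1) → ℝ) × ℝ => ts.2 ^ k)
      (((k : ℝ) * p.2 ^ (k - 1)) • SCLM m₀) p :=
    (hasDerivAt_pow k p.2).comp_hasFDerivAt p ((SCLM m₀).hasFDerivAt)
  have h3 := h1.mul h2
  have h4 : (c * extF m₀ p.1 n) • ((k : ℝ) * p.2 ^ (k - 1)) • SCLM m₀ + p.2 ^ k • c • PnCLM m₀ n
      = (c * p.2 ^ k) • PnCLM m₀ n + (c * extF m₀ p.1 n * ((k : ℝ) * p.2 ^ (k - 1))) • SCLM m₀ := by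
    rw [smul_smul, smul_smul]; module
  exact h4 ▸ h3

lemma partA (m₀ j : ℕ) (hj : j ≤ m₀ + 1) (s : ℝ) (V : ℕ → ℝ) (hV : V (m₀ + 1) = 0) :
    ∑ k ∈ Finset.range (j + 1), (j.choose k : ℝ) * s ^ k * V (j - k)
      = ∑ i ∈ Finset.range (m₀ + 1), (j.choose i : ℝ) * s ^ (j - i) * V i := by
  have hrefl := Finset.sum_range_reflect
    (fun k => (j.choose k : ℝ) * s ^ k * V (j - k)) (j + 1)
  simp only [Nat.add_sub_cancel] at hrefl
  rw [← hrefl]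
  have hmid : ∀ i ∈ Finset.range (j + 1),
      (j.choose (j - i) : ℝ) * s ^ (j - i) * V (j - (j - i))
        = (j.choose i : ℝ) * s ^ (j - i) * V i := by
    intro i hi
    have hi' : i ≤ j := by simp only [Finset.mem_range] at hi; omega
    rw [Nat.choose_symm hi', Nat.sub_sub_self hi']
  rw [Finset.sum_congr rfl hmid]
  rcases le_or_gt j m₀ with h | h
  · refine Finset.sum_subset (Finset.range_subset_range.2 (by omega)) ?_
    intro i hi hi'
    have : j < i := by simp only [Finset.mem_range] at *; omega
    simp [Nat.choose_eq_zero_of_lt this]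
  · have hj' : j = m₀ + 1 := by omega
    subst hj'
    rw [Finset.sum_range_succ]
    simp [hV]

lemma partB (m₀ j : ℕ) (hj : j ≤ m₀ + 1) (s : ℝ) (T : ℕ → ℝ) :
    ∑ k ∈ Finset.range (j + 1), (j.choose k : ℝ) * T (j - k) * ((k : ℝ) * s ^ (k - 1))
      = (j : ℝ) * Fpoly m₀ (j - 1) T s := by
  cases j with
  | zero => simp
  | succ j' =>
    have hj' : j' ≤ m₀ := by omega
    rw [show j' + 1 - 1 = j' from rfl, Fpoly, if_pos hj']
    rw [Finset.sum_range_succ']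
    rw [Finset.mul_sum]
    have h0 : ((j' + 1).choose 0 : ℝ) * T (j' + 1 - 0) * ((0 : ℕ) : ℝ) * s ^ (0 - 1) = 0 := by
      simp
    simp only [Nat.cast_zero, zero_mul, mul_zero, add_zero]
    apply Finset.sum_congr rfl
    intro k hk
    have hc : (((j' + 1).choose (k + 1) : ℕ) : ℝ) * ((k + 1 : ℕ) : ℝ)
        = ((j' + 1 : ℕ) : ℝ) * ((j'.choose k : ℕ) : ℝ) := by
      exact_mod_cast (Nat.add_one_mul_choose_eq j' k).symm
    have hsub : j' + 1 - (k + 1) = j' - k := by omega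
    rw [hsub]
    push_cast at hc ⊢
    linear_combination T (j' - k) * s ^ k * hc

lemma hasFDerivAt_Fmap (m₀ : ℕ) (t : Fin (m₀ + 1) → ℝ) (s : ℝ) :
    HasFDerivAt (Fmap m₀) (ACLM m₀ t s) (t, s) := by
  apply hasFDerivAt_pi''
  intro j
  have hj : (j : ℕ) ≤ m₀ + 1 := Nat.lt_succ_iff.1 j.isLt
  have hfun : (fun ts : (Fin (m₀ + 1) → ℝ) × ℝ => Fmap m₀ ts j)
      = fun ts => ∑ k ∈ Finset.range ((j : ℕ) + 1),
          ((j : ℕ).choose k : ℝ) * extF m₀ ts.1 ((j : ℕ) - k) * ts.2 ^ k := by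
    funext ts; rw [Fmap_apply, Fpoly_extF m₀ _ hj]
  have hproj : (ContinuousLinearMap.proj j).comp (ACLM m₀ t s) = rowCLM m₀ t s (j : ℕ) := by
    refine ContinuousLinearMap.ext fun v => ?_
    simp [ACLM]
  rw [hfun, hproj]
  have hD := HasFDerivAt.fun_sum (u := Finset.range ((j : ℕ) + 1))
    (A := fun k => fun ts : (Fin (m₀ + 1) → ℝ) × ℝ =>
      ((j : ℕ).choose k : ℝ) * extF m₀ ts.1 ((j : ℕ) - k) * ts.2 ^ k)
    (fun k _ => term_deriv m₀ ((j : ℕ).choose k : ℝ) ((j : ℕ) - k) k (t, s))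
  have heq : (∑ k ∈ Finset.range ((j : ℕ) + 1),
        ((((j : ℕ).choose k : ℝ) * s ^ k) • PnCLM m₀ ((j : ℕ) - k)
          + (((j : ℕ).choose k : ℝ) * extF m₀ t ((j : ℕ) - k) * ((k : ℝ) * s ^ (k - 1)))
              • SCLM m₀))
      = rowCLM m₀ t s (j : ℕ) := by
    refine ContinuousLinearMap.ext fun v => ?_
    rw [rowCLM_apply]
    simp only [ContinuousLinearMap.sum_apply, ContinuousLinearMap.add_apply,
      ContinuousLinearMap.coe_smul', Pi.smul_apply, PnCLM_apply, smul_eq_mul]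
    rw [Finset.sum_add_distrib]
    have e1 : ∑ k ∈ Finset.range ((j : ℕ) + 1),
        (((j : ℕ).choose k : ℝ) * s ^ k) * extF m₀ v.1 ((j : ℕ) - k)
        = ∑ i ∈ Finset.range (m₀ + 1),
            ((j : ℕ).choose i : ℝ) * s ^ ((j : ℕ) - i) * extF m₀ v.1 i := by
      rw [← partA m₀ (j : ℕ) hj s (extF m₀ v.1) (extF_top m₀ v.1)]
    have e2 : ∑ k ∈ Finset.range ((j : ℕ) + 1),
        (((j : ℕ).choose k : ℝ) * extF m₀ t ((j : ℕ) - k) * ((k : ℝ) * s ^ (k - 1))) * v.2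
        = ((j : ℕ) : ℝ) * Fpoly m₀ ((j : ℕ) - 1) (extF m₀ t) s * v.2 := by
      rw [← partB m₀ (j : ℕ) hj s (extF m₀ t), Finset.sum_mul]
    simp only [SCLM, ContinuousLinearMap.coe_snd']
    rw [← e1, ← e2]
  exact heq ▸ hD

/-! ### Injectivity -/

lemma alt_sum' (n i : ℕ) (hi : i ≤ n) (x : ℝ) :
    ∑ j ∈ Finset.range (n + 1),
        (-1 : ℝ) ^ (n - j) * (n.choose j : ℝ) * (j.choose i : ℝ) * (x ^ (n - j) * x ^ (j - i))
      = if i = n then 1 else 0 := by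
  have hsub : ∑ j ∈ Finset.range (n + 1),
        (-1 : ℝ) ^ (n - j) * (n.choose j : ℝ) * (j.choose i : ℝ) * (x ^ (n - j) * x ^ (j - i))
      = ∑ j ∈ Finset.Ico i (n + 1),
        (-1 : ℝ) ^ (n - j) * (n.choose j : ℝ) * (j.choose i : ℝ) * (x ^ (n - j) * x ^ (j - i)) := by
    rw [Finset.range_eq_Ico]
    refine (Finset.sum_subset (Finset.Ico_subset_Ico (Nat.zero_le i) le_rfl) ?_).symm
    intro j hj hj'
    have hji : j < i := by
      simp only [Finset.mem_Ico] at hj hj'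
      omega
    simp [Nat.choose_eq_zero_of_lt hji]
  rw [hsub, Finset.sum_Ico_eq_sum_range]
  have hni : n + 1 - i = (n - i) + 1 := by omega
  rw [hni]
  have halt : ∑ r ∈ Finset.range ((n - i) + 1), (-1 : ℝ) ^ r * ((n - i).choose r : ℝ)
      = if n - i = 0 then 1 else 0 := by
    have h := Int.alternating_sum_range_choose (n := n - i)
    have h2 := congrArg (fun z : ℤ => (z : ℝ)) h
    push_cast at h2
    simpa [apply_ite] using h2
  have hterm : ∀ r ∈ Finset.range ((n - i) + 1),
      (-1 : ℝ) ^ (n - (i + r)) * (n.choose (i + r) : ℝ) * ((i + r).choose i : ℝ)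
          * (x ^ (n - (i + r)) * x ^ (i + r - i))
        = ((n.choose i : ℝ) * ((-1) ^ (n - i) * x ^ (n - i)))
            * ((-1 : ℝ) ^ r * ((n - i).choose r : ℝ)) := by
    intro r hr
    have hrm : r ≤ n - i := by
      simp only [Finset.mem_range] at hr; omega
    have h1 : n - (i + r) = (n - i) - r := by omega
    have h2 : i + r - i = r := by omega
    have h3 : (n - i) - r + r = n - i := by omega
    have hcc : (n.choose (i + r) : ℝ) * ((i + r).choose i : ℝ)
        = (n.choose i : ℝ) * ((n - i).choose r : ℝ) := by
      have := Nat.choose_mul (n := n) (k := i + r) (s := i) (by omega)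
      have h4 : i + r - i = r := by omega
      rw [h4] at this
      exact_mod_cast congrArg (fun z : ℕ => (z : ℝ)) this
    have hrr : (-1 : ℝ) ^ r * (-1 : ℝ) ^ r = 1 := by
      rw [← mul_pow]; norm_num
    have hsgn : (-1 : ℝ) ^ ((n - i) - r) = (-1) ^ (n - i) * (-1) ^ r := by
      calc (-1 : ℝ) ^ ((n - i) - r)
          = (-1 : ℝ) ^ ((n - i) - r) * ((-1) ^ r * (-1) ^ r) := by rw [hrr, mul_one]
        _ = ((-1 : ℝ) ^ ((n - i) - r) * (-1) ^ r) * (-1) ^ r := by ring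
        _ = (-1 : ℝ) ^ ((n - i) - r + r) * (-1) ^ r := by rw [pow_add]
        _ = _ := by rw [h3]
    have hxp : x ^ ((n - i) - r) * x ^ r = x ^ (n - i) := by
      rw [← pow_add, h3]
    rw [h1, h2, hsgn]
    calc ((-1 : ℝ) ^ (n - i) * (-1) ^ r) * (n.choose (i + r) : ℝ) * ((i + r).choose i : ℝ)
          * (x ^ ((n - i) - r) * x ^ r)
        = ((n.choose (i + r) : ℝ) * ((i + r).choose i : ℝ))
            * (((-1 : ℝ) ^ (n - i) * (-1) ^ r) * (x ^ ((n - i) - r) * x ^ r)) := by ring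
      _ = ((n.choose i : ℝ) * ((n - i).choose r : ℝ))
            * (((-1 : ℝ) ^ (n - i) * (-1) ^ r) * x ^ (n - i)) := by rw [hcc, hxp]
      _ = _ := by ring
  rw [Finset.sum_congr rfl hterm, ← Finset.mul_sum, halt]
  by_cases h : i = n
  · subst h
    simp
  · have h0 : n - i ≠ 0 := by omega
    simp [h0, h]

lemma Fpoly_reflect (m₀ l : ℕ) (hl : l ≤ m₀) (T : ℕ → ℝ) (s : ℝ) :
    Fpoly m₀ l T s = ∑ i ∈ Finset.range (l + 1), (l.choose i : ℝ) * T i * s ^ (l - i) := by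
  rw [Fpoly, if_pos hl]
  rw [← Finset.sum_range_reflect (fun i => (l.choose i : ℝ) * T i * s ^ (l - i)) (l + 1)]
  apply Finset.sum_congr rfl
  intro k hk
  have hk' : k ≤ l := by simp only [Finset.mem_range] at hk; omega
  simp only [Nat.add_sub_cancel]
  rw [Nat.choose_symm hk', Nat.sub_sub_self hk']

lemma ACLM_injective (m₀ : ℕ) (t : Fin (m₀ + 1) → ℝ) (s : ℝ) (ht : t (Fin.last m₀) ≠ 0) :
    Function.Injective (ACLM m₀ t s) := by
  rw [injective_iff_map_eq_zero]
  intro v hv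
  have hrow : ∀ j : ℕ, j < m₀ + 2 → rowCLM m₀ t s j v = 0 := by
    intro j hj
    have h := congrFun hv ⟨j, hj⟩
    simpa [ACLM] using h
  -- Step 1: the last coordinate vanishes
  have hv2 : v.2 = 0 := by
    have hzero : ∑ j ∈ Finset.range (m₀ + 2),
        ((-1 : ℝ) ^ (m₀ + 1 - j) * ((m₀ + 1).choose j : ℝ) * s ^ (m₀ + 1 - j))
          * rowCLM m₀ t s j v = 0 :=
      Finset.sum_eq_zero fun j hj => by rw [hrow j (Finset.mem_range.1 hj), mul_zero]
    have hexp : ∑ j ∈ Finset.range (m₀ + 2),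
        ((-1 : ℝ) ^ (m₀ + 1 - j) * ((m₀ + 1).choose j : ℝ) * s ^ (m₀ + 1 - j))
          * rowCLM m₀ t s j v
        = (∑ i ∈ Finset.range (m₀ + 1), ∑ j ∈ Finset.range (m₀ + 2),
            ((-1 : ℝ) ^ (m₀ + 1 - j) * ((m₀ + 1).choose j : ℝ) * (j.choose i : ℝ)
              * (s ^ (m₀ + 1 - j) * s ^ (j - i))) * extF m₀ v.1 i)
          + (∑ j ∈ Finset.range (m₀ + 2),
              ((-1 : ℝ) ^ (m₀ + 1 - j) * ((m₀ + 1).choose j : ℝ) * s ^ (m₀ + 1 - j))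
                * ((j : ℝ) * Fpoly m₀ (j - 1) (extF m₀ t) s)) * v.2 := by
      simp only [rowCLM_apply, mul_add]
      rw [Finset.sum_add_distrib]
      congr 1
      · calc ∑ j ∈ Finset.range (m₀ + 2),
            ((-1 : ℝ) ^ (m₀ + 1 - j) * ((m₀ + 1).choose j : ℝ) * s ^ (m₀ + 1 - j))
              * ∑ i ∈ Finset.range (m₀ + 1), (j.choose i : ℝ) * s ^ (j - i) * extF m₀ v.1 i
            = ∑ j ∈ Finset.range (m₀ + 2), ∑ i ∈ Finset.range (m₀ + 1),
                ((-1 : ℝ) ^ (m₀ + 1 - j) * ((m₀ + 1).choose j : ℝ) * (j.choose i : ℝ)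
                  * (s ^ (m₀ + 1 - j) * s ^ (j - i))) * extF m₀ v.1 i := by
              refine Finset.sum_congr rfl fun j _ => ?_
              rw [Finset.mul_sum]
              exact Finset.sum_congr rfl fun i _ => by ring
          _ = _ := Finset.sum_comm
      · rw [Finset.sum_mul]
        exact Finset.sum_congr rfl fun j _ => by ring
    have hA0 : ∀ i ∈ Finset.range (m₀ + 1),
        ∑ j ∈ Finset.range (m₀ + 2),
          ((-1 : ℝ) ^ (m₀ + 1 - j) * ((m₀ + 1).choose j : ℝ) * (j.choose i : ℝ)
            * (s ^ (m₀ + 1 - j) * s ^ (j - i))) * extF m₀ v.1 i = 0 := by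
      intro i hi
      have hi' : i ≤ m₀ + 1 := by simp only [Finset.mem_range] at hi; omega
      rw [← Finset.sum_mul, alt_sum' (m₀ + 1) i hi' s]
      have hne : i ≠ m₀ + 1 := by simp only [Finset.mem_range] at hi; omega
      simp [hne]
    have hB : ∑ j ∈ Finset.range (m₀ + 2),
        ((-1 : ℝ) ^ (m₀ + 1 - j) * ((m₀ + 1).choose j : ℝ) * s ^ (m₀ + 1 - j))
          * ((j : ℝ) * Fpoly m₀ (j - 1) (extF m₀ t) s)
        = ((m₀ : ℝ) + 1) * extF m₀ t m₀ := by
      rw [Finset.sum_range_succ']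
      simp only [Nat.cast_zero, zero_mul, mul_zero, add_zero, Nat.add_sub_cancel]
      have hFl : ∀ l ∈ Finset.range (m₀ + 1), Fpoly m₀ l (extF m₀ t) s
          = ∑ i ∈ Finset.range (m₀ + 1), (l.choose i : ℝ) * extF m₀ t i * s ^ (l - i) := by
        intro l hl
        have hl' : l ≤ m₀ := by simp only [Finset.mem_range] at hl; omega
        rw [Fpoly_reflect m₀ l hl' _ s]
        refine Finset.sum_subset (Finset.range_subset_range.2 (by omega)) ?_
        intro i hi hi'
        have hli : l < i := by simp only [Finset.mem_range] at hi hi'; omega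
        simp [Nat.choose_eq_zero_of_lt hli]
      have hstep : ∀ l ∈ Finset.range (m₀ + 1),
          ((-1 : ℝ) ^ (m₀ + 1 - (l + 1)) * ((m₀ + 1).choose (l + 1) : ℝ)
              * s ^ (m₀ + 1 - (l + 1))) * (((l + 1 : ℕ) : ℝ) * Fpoly m₀ l (extF m₀ t) s)
          = ∑ i ∈ Finset.range (m₀ + 1), ((m₀ : ℝ) + 1)
              * (((-1 : ℝ) ^ (m₀ - l) * (m₀.choose l : ℝ) * (l.choose i : ℝ)
                  * (s ^ (m₀ - l) * s ^ (l - i))) * extF m₀ t i) := by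
        intro l hl
        have hms : m₀ + 1 - (l + 1) = m₀ - l := by omega
        rw [hms, hFl l hl, Finset.mul_sum, Finset.mul_sum]
        refine Finset.sum_congr rfl fun i _ => ?_
        have hsc : (((m₀ + 1).choose (l + 1) : ℕ) : ℝ) * ((l + 1 : ℕ) : ℝ)
            = ((m₀ + 1 : ℕ) : ℝ) * ((m₀.choose l : ℕ) : ℝ) := by
          exact_mod_cast (Nat.add_one_mul_choose_eq m₀ l).symm
        push_cast at hsc ⊢
        linear_combination ((-1 : ℝ) ^ (m₀ - l) * s ^ (m₀ - l) * (l.choose i : ℝ)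
          * extF m₀ t i * s ^ (l - i)) * hsc
      rw [Finset.sum_congr rfl hstep, Finset.sum_comm]
      have hinner : ∀ i ∈ Finset.range (m₀ + 1),
          ∑ l ∈ Finset.range (m₀ + 1), ((m₀ : ℝ) + 1)
              * (((-1 : ℝ) ^ (m₀ - l) * (m₀.choose l : ℝ) * (l.choose i : ℝ)
                  * (s ^ (m₀ - l) * s ^ (l - i))) * extF m₀ t i)
          = if i = m₀ then ((m₀ : ℝ) + 1) * extF m₀ t m₀ else 0 := by
        intro i hi
        have hi' : i ≤ m₀ := by simp only [Finset.mem_range] at hi; omega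
        rw [← Finset.mul_sum, ← Finset.sum_mul, alt_sum' m₀ i hi' s]
        by_cases h : i = m₀ <;> simp [h]
      rw [Finset.sum_congr rfl hinner, Finset.sum_ite_eq' (Finset.range (m₀ + 1)) m₀]
      simp
    rw [hexp, Finset.sum_eq_zero hA0, hB, zero_add] at hzero
    have htm : extF m₀ t m₀ = t (Fin.last m₀) := by
      simp [extF, Fin.last]
    rw [htm] at hzero
    have hm1 : ((m₀ : ℝ) + 1) ≠ 0 := by positivity
    rcases mul_eq_zero.1 hzero with h | h
    · exact absurd (mul_eq_zero.1 h) (by push_neg; exact ⟨hm1, ht⟩)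
    · exact h
  -- Step 2: the other coordinates vanish by triangularity
  have hV : ∀ j, j < m₀ + 1 → extF m₀ v.1 j = 0 := by
    intro j
    induction j using Nat.strong_induction_on with
    | _ j IH =>
      intro hj
      have h := hrow j (by omega)
      rw [rowCLM_apply, hv2, mul_zero, add_zero] at h
      have hzero' : ∀ i ∈ Finset.range (m₀ + 1), i ≠ j →
          (j.choose i : ℝ) * s ^ (j - i) * extF m₀ v.1 i = 0 := by
        intro i hi hne
        rcases lt_or_gt_of_ne hne with hlt | hgt
        · rw [IH i hlt (by simp only [Finset.mem_range] at hi; exact hi), mul_zero]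
        · simp [Nat.choose_eq_zero_of_lt hgt]
      rw [Finset.sum_eq_single_of_mem j (Finset.mem_range.2 hj) hzero'] at h
      simpa using h
  have h1 : v.1 = 0 := by
    funext i
    have h := hV (i : ℕ) i.isLt
    rwa [extF_coe] at h
  exact Prod.ext h1 hv2

/-! ### Smoothness -/

lemma contDiff_Fmap (m₀ : ℕ) : ContDiff ℝ ω (Fmap m₀) := by
  rw [contDiff_pi]
  intro j
  have hj : (j : ℕ) ≤ m₀ + 1 := Nat.lt_succ_iff.1 j.isLt
  have hfun : (fun ts : (Fin (m₀ + 1) → ℝ) × ℝ => Fmap m₀ ts j)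
      = fun ts => ∑ k ∈ Finset.range ((j : ℕ) + 1),
          ((j : ℕ).choose k : ℝ) * extF m₀ ts.1 ((j : ℕ) - k) * ts.2 ^ k := by
    funext ts; rw [Fmap_apply, Fpoly_extF m₀ _ hj]
  rw [hfun]
  apply ContDiff.sum
  intro k _
  have h1 : ContDiff ℝ ω (fun ts : (Fin (m₀ + 1) → ℝ) × ℝ => extF m₀ ts.1 ((j : ℕ) - k)) := by
    have : (fun ts : (Fin (m₀ + 1) → ℝ) × ℝ => extF m₀ ts.1 ((j : ℕ) - k))
        = ⇑(PnCLM m₀ ((j : ℕ) - k)) := by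
      funext ts; rw [PnCLM_apply]
    rw [this]; exact (PnCLM m₀ _).contDiff
  exact (contDiff_const.mul h1).mul (contDiff_snd.pow k)

/-- At every point with `t_{m₀} ≠ 0`, the map `F` has invertible Jacobian and a local `C^∞`
inverse. -/
theorem stmt_13 (m₀ : ℕ) (t : Fin (m₀ + 1) → ℝ) (s : ℝ) (ht : t (Fin.last m₀) ≠ 0) :
    ∃ A : ((Fin (m₀ + 1) → ℝ) × ℝ) ≃L[ℝ] (Fin (m₀ + 2) → ℝ),
      HasFDerivAt (Fmap m₀) (A : ((Fin (m₀ + 1) → ℝ) × ℝ) →L[ℝ] (Fin (m₀ + 2) → ℝ)) (t, s) ∧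
      ∃ (U : Set ((Fin (m₀ + 1) → ℝ) × ℝ)) (W : Set (Fin (m₀ + 2) → ℝ))
        (Finv : (Fin (m₀ + 2) → ℝ) → (Fin (m₀ + 1) → ℝ) × ℝ),
        IsOpen U ∧ IsOpen W ∧ (t, s) ∈ U ∧ Fmap m₀ (t, s) ∈ W ∧
        Set.MapsTo (Fmap m₀) U W ∧ ContDiffOn ℝ ∞ Finv W ∧
        (∀ x ∈ U, Finv (Fmap m₀ x) = x) ∧ (∀ z ∈ W, Fmap m₀ (Finv z) = z) := by
  classical
  have hrank : Module.finrank ℝ ((Fin (m₀ + 1) → ℝ) × ℝ)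
      = Module.finrank ℝ (Fin (m₀ + 2) → ℝ) := by
    simp [Module.finrank_prod]
  let e₀ : ((Fin (m₀ + 1) → ℝ) × ℝ) ≃ₗ[ℝ] (Fin (m₀ + 2) → ℝ) :=
    LinearMap.linearEquivOfInjective (ACLM m₀ t s).toLinearMap
      (ACLM_injective m₀ t s ht) hrank
  let A : ((Fin (m₀ + 1) → ℝ) × ℝ) ≃L[ℝ] (Fin (m₀ + 2) → ℝ) := e₀.toContinuousLinearEquiv
  have hA : (A : ((Fin (m₀ + 1) → ℝ) × ℝ) →L[ℝ] (Fin (m₀ + 2) → ℝ)) = ACLM m₀ t s := by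
    refine ContinuousLinearMap.ext fun v => ?_
    show e₀ v = ACLM m₀ t s v
    exact LinearMap.linearEquivOfInjective_apply _ _ v
  have hF' : HasFDerivAt (Fmap m₀)
      (A : ((Fin (m₀ + 1) → ℝ) × ℝ) →L[ℝ] (Fin (m₀ + 2) → ℝ)) (t, s) := by
    rw [hA]; exact hasFDerivAt_Fmap m₀ t s
  refine ⟨A, hF', ?_⟩
  have hcd : ContDiffAt ℝ ω (Fmap m₀) (t, s) := (contDiff_Fmap m₀).contDiffAt
  have hn : (ω : WithTop ℕ∞) ≠ 0 := by simp
  set Φ := hcd.toOpenPartialHomeomorph (Fmap m₀) hF' hn with hΦ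
  have hΦcoe : (Φ : ((Fin (m₀ + 1) → ℝ) × ℝ) → (Fin (m₀ + 2) → ℝ)) = Fmap m₀ := rfl
  have hinv_cd : ContDiffAt ℝ ω (hcd.localInverse hF' hn) (Fmap m₀ (t, s)) :=
    hcd.to_localInverse hF' hn
  have hloc : hcd.localInverse hF' hn = Φ.symm := rfl
  obtain ⟨u, hu, hcdu⟩ :=
    hinv_cd.contDiffOn (m := (∞ : WithTop ℕ∞)) le_top (fun _ => rfl)
  obtain ⟨u', hu'sub, hu'open, hu'mem⟩ := mem_nhds_iff.1 hu
  refine ⟨Φ.source ∩ (Fmap m₀) ⁻¹' (Φ.target ∩ u'), Φ.target ∩ u', Φ.symm,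
    ?_, ?_, ?_, ?_, ?_, ?_, ?_, ?_⟩
  · exact (Φ.open_source.inter ((Φ.open_target.inter hu'open).preimage
      (contDiff_Fmap m₀).continuous))
  · exact Φ.open_target.inter hu'open
  · refine ⟨hcd.mem_toOpenPartialHomeomorph_source hF' hn, ?_, hu'mem⟩
    exact hcd.image_mem_toOpenPartialHomeomorph_target hF' hn
  · exact ⟨hcd.image_mem_toOpenPartialHomeomorph_target hF' hn, hu'mem⟩
  · intro x hx
    exact hx.2
  · exact (hcdu.mono hu'sub).mono Set.inter_subset_right
  · intro x hx
    have := Φ.left_inv hx.1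
    rwa [hΦcoe] at this
  · intro z hz
    have := Φ.right_inv hz.1
    rwa [hΦcoe] at this
end
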